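/- Let G be a finite connected simple graph and let R be a request set whose request graph H_R is a tree rooted at a vertex r. For u a vertex of H_R, let E_R(u) denote the set of requests lying in the subtree of H_R rooted at u, let Child(u) = {u_1, ..., u_γ} be the children of u in H_R, and for vertices u of H_R and α of G define C(u, α) as the minimum cost of a dispersal D of G that satisfies E_R(u) and such that some walk from u to α has all its edges in D_u. Then for every vertex u of H_R and every vertex α of G: C(u, α) = min over tuples (α_1, ..., α_γ) of vertices of G of [ c_min(G, { {u, α_1}, ..., {u, α_γ}, {u, α} }) + Σ_{k=1}^{γ} C(u_k, α_k) ]. -/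

import Mathlib

open SimpleGraph Finset

/-- A dispersal `D` of `G` satisfies a request set `R` if for every request `{u,v} ∈ R`
there is a walk from `u` to `v` all of whose edges lie in `D u ∪ D v`. -/
def Satisfies {V : Type*} (G : SimpleGraph V) (D : V → Finset (Sym2 V))
    (R : Set (Sym2 V)) : Prop :=
  ∀ u v : V, s(u, v) ∈ R → ∃ p : G.Walk u v, ∀ e ∈ p.edges, e ∈ D u ∨ e ∈ D v

/-- `D` is a dispersal of `G`: every assigned edge is an edge of `G`. -/
def IsDispersal {V : Type*} (G : SimpleGraph V) (D : V → Finset (Sym2 V)) : Prop :=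
  ∀ v : V, ∀ e ∈ D v, e ∈ G.edgeSet

/-- The cost of a dispersal. -/
def cost {V : Type*} [Fintype V] (D : V → Finset (Sym2 V)) : ℕ :=
  ∑ v, (D v).card

/-- An edge set `S` connects a terminal set `T` if any two vertices of `T` are joined by a
walk in `G` using only edges of `S`. -/
def Connects {V : Type*} (G : SimpleGraph V) (S : Finset (Sym2 V)) (T : Finset V) : Prop :=
  ∀ a ∈ T, ∀ b ∈ T, ∃ p : G.Walk a b, ∀ e ∈ p.edges, e ∈ S

/-- The star request set with center `vr` and leaf set `T \ {vr}`. -/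
def starR {V : Type*} (vr : V) (T : Finset V) : Set (Sym2 V) :=
  {e | ∃ u ∈ T, u ≠ vr ∧ e = s(vr, u)}

/-- The minimum cost of a dispersal of `G` satisfying `R`. -/
noncomputable def cmin {V : Type*} [Fintype V] (G : SimpleGraph V) (R : Set (Sym2 V)) : ℕ :=
  sInf {c | ∃ D : V → Finset (Sym2 V), IsDispersal G D ∧ Satisfies G D R ∧ cost D = c}

/-- `x` lies in the subtree of the tree `HR` (rooted at `r`) rooted at `u`:
`u` lies on the (unique) path from `r` to `x`. -/
def InSubtree {V : Type*} (HR : SimpleGraph V) (r u x : V) : Prop :=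
  HR.dist r x = HR.dist r u + HR.dist u x

/-- `E_R(u)`: the requests (edges of `HR`) lying in the subtree of `HR` rooted at `u`. -/
def ERsub {V : Type*} (HR : SimpleGraph V) (R : Finset (Sym2 V)) (r u : V) :
    Set (Sym2 V) :=
  {e | e ∈ R ∧ ∀ x ∈ e, InSubtree HR r u x}

open scoped Classical in
/-- The children of `u` in the tree `HR` rooted at `r`. -/
noncomputable def childrenOf {V : Type*} [Fintype V] (HR : SimpleGraph V) (r u : V) :
    Finset V :=
  Finset.univ.filter (fun w => HR.Adj u w ∧ HR.dist r w = HR.dist r u + 1)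

/-- `C(u, α)`: the minimum cost of a dispersal `D` of `G` satisfying `E_R(u)` such that
some walk from `u` to `α` has all its edges in `D u`. -/
noncomputable def Cfun {V : Type*} [Fintype V] (G HR : SimpleGraph V)
    (R : Finset (Sym2 V)) (r u α : V) : ℕ :=
  sInf {c | ∃ D : V → Finset (Sym2 V), IsDispersal G D ∧
    Satisfies G D (ERsub HR R r u) ∧
    (∃ p : G.Walk u α, ∀ e ∈ p.edges, e ∈ D u) ∧ cost D = c}

/-!
`≤`: hand all edges of an optimal dispersal for the star requests to `u` and add optimal
dispersals for the subtrees of the children `w`, anchored at `f w`; the request `{u, w}` is then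
served by a walk through `f w`.

`≥`: among the optimal dispersals `D` for `C(u, α)` take one with the fewest detached edges
(edges of `D v` not reachable from `v` inside `D v`). For every child `w` the parts of `D u` and
`D w` reachable from `u` and `w` then meet in a vertex `f w`. Otherwise the walk serving
`{u, w}` leaves the first part through an edge of `D w` detached from `w`, and moving that edge
to `u` keeps the cost and lowers the number of detached edges; if the move breaks a request
`{w, c}`, the same situation reappears one level deeper, which cannot go on forever. Restricting
`D` to `u` and to the subtrees of the children bounds the right-hand side by the cost of `D`.
-/

section Reachability

open scoped Classical

variable {V : Type*} {G : SimpleGraph V} {S T : Finset (Sym2 V)} {a b c x y : V}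

def ReachableWithin (G : SimpleGraph V) (S : Finset (Sym2 V)) (a b : V) : Prop :=
  ∃ p : G.Walk a b, ∀ e ∈ p.edges, e ∈ S

namespace ReachableWithin

theorem refl (a : V) : ReachableWithin G S a a := ⟨.nil, by simp⟩

theorem symm : ReachableWithin G S a b → ReachableWithin G S b a := fun ⟨p, hp⟩ =>
  ⟨p.reverse, fun e he => hp e (by simpa using he)⟩

theorem trans : ReachableWithin G S a b → ReachableWithin G S b c → ReachableWithin G S a c :=
  fun ⟨p, hp⟩ ⟨q, hq⟩ => ⟨p.append q, fun e he => by
    rw [Walk.edges_append, List.mem_append] at he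
    exact he.elim (hp e) (hq e)⟩

theorem mono (h : ReachableWithin G S a b) (hST : S ⊆ T) : ReachableWithin G T a b :=
  let ⟨p, hp⟩ := h
  ⟨p, fun e he => hST (hp e he)⟩

theorem step (h : ReachableWithin G S a x) (hxy : G.Adj x y) (he : s(x, y) ∈ S) :
    ReachableWithin G S a y :=
  h.trans ⟨hxy.toWalk, by simpa using he⟩

theorem of_mem_support {p : G.Walk a b} (hp : ∀ e ∈ p.edges, e ∈ S) (hx : x ∈ p.support) :
    ReachableWithin G S a x := by
  classical
  exact ⟨p.takeUntil x hx, fun e he => hp e (p.edges_takeUntil_subset_edges hx he)⟩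

/-- A walk from `a` inside `S` only visits vertices reachable from `a`, so it never uses `h`. -/
theorem erase_iff {h : Sym2 V} (hh : ∀ x ∈ h, ¬ ReachableWithin G S a x) :
    ReachableWithin G (S.erase h) a b ↔ ReachableWithin G S a b := by
  refine ⟨fun hb => hb.mono (erase_subset h S), fun ⟨p, hp⟩ => ⟨p, fun e he => ?_⟩⟩
  refine mem_erase.2 ⟨?_, hp e he⟩
  rintro rfl
  induction e using Sym2.ind with
  | _ x y =>
    exact hh x (Sym2.mem_mk_left x y) (of_mem_support hp (p.fst_mem_support_of_mem_edges he))

theorem of_sym2_eq {D : V → Finset (Sym2 V)} (he : s(x, y) = s(a, b))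
    (h : ReachableWithin G (D a ∪ D b) a b) : ReachableWithin G (D x ∪ D y) x y := by
  rcases Sym2.eq_iff.1 he with ⟨rfl, rfl⟩ | ⟨rfl, rfl⟩
  · exact h
  · exact union_comm (D y) (D x) ▸ h.symm

end ReachableWithin

theorem satisfies_iff {D : V → Finset (Sym2 V)} {Q : Set (Sym2 V)} :
    Satisfies G D Q ↔ ∀ x y, s(x, y) ∈ Q → ReachableWithin G (D x ∪ D y) x y := by
  simp only [Satisfies, ReachableWithin, mem_union]

theorem SimpleGraph.Connected.reachableWithin_edgeFinset [Fintype G.edgeSet] (hG : G.Connected)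
    (a b : V) :
    ReachableWithin G G.edgeFinset a b :=
  ⟨(hG a b).some, fun _ he => mem_edgeFinset.2 ((hG a b).some.edges_subset_edgeSet he)⟩

def IsTransferable (G : SimpleGraph V) (D : V → Finset (Sym2 V)) (a b : V) (h : Sym2 V) :
    Prop :=
  h ∈ D b ∧ h ∉ D a ∧ (∀ x ∈ h, ¬ ReachableWithin G (D b) b x) ∧
    ∃ x ∈ h, ReachableWithin G (D a) a x

/-- Follow the walk until it first leaves the part of `D a` reachable from `a`. -/
theorem ReachableWithin.meet_or_isTransferable {D : V → Finset (Sym2 V)}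
    (hab : ReachableWithin G (D a ∪ D b) a b) :
    (∃ z, ReachableWithin G (D a) a z ∧ ReachableWithin G (D b) b z) ∨
      ∃ h, IsTransferable G D a b h := by
  by_cases hb : ReachableWithin G (D a) a b
  · exact .inl ⟨b, hb, .refl b⟩
  obtain ⟨p, hp⟩ := hab
  obtain ⟨d, hd, hfst, hsnd⟩ :=
    p.exists_boundary_dart {x | ReachableWithin G (D a) a x} (.refl a) hb
  have hda : d.edge ∉ D a := fun h => hsnd (ReachableWithin.step hfst d.adj h)
  have hdb : d.edge ∈ D b := (mem_union.1 (hp _ (List.mem_map_of_mem hd))).resolve_left hda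
  by_cases hatt : ∃ x ∈ d.edge, ReachableWithin G (D b) b x
  · obtain ⟨x, hx, hbx⟩ := hatt
    refine .inl ⟨d.fst, hfst, ?_⟩
    rcases Sym2.mem_iff.1 hx with rfl | rfl
    · exact hbx
    · exact hbx.step d.adj.symm (Sym2.eq_swap ▸ hdb)
  · push Not at hatt
    exact .inr ⟨d.edge, hdb, hda, hatt, d.fst, Sym2.mem_mk_left _ _, hfst⟩

end Reachability

section Dispersal

open scoped Classical

variable {V : Type*} {G : SimpleGraph V} {D E : V → Finset (Sym2 V)} {Q : Set (Sym2 V)}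
  {u α : V}

theorem Satisfies.mono (hD : Satisfies G D Q) (hDE : ∀ v, D v ⊆ E v) : Satisfies G E Q :=
  satisfies_iff.2 fun x y hxy =>
    (satisfies_iff.1 hD x y hxy).mono (union_subset_union (hDE x) (hDE y))

theorem IsDispersal.piecewise (hD : IsDispersal G D) (s : Finset V) :
    IsDispersal G (s.piecewise D fun _ => ∅) := by
  intro v e he
  by_cases hv : v ∈ s
  · exact hD v e (by rwa [piecewise_eq_of_mem _ _ _ hv] at he)
  · simp [piecewise_eq_of_notMem _ _ _ hv] at he

theorem IsDispersal.union (hD : IsDispersal G D) (hE : IsDispersal G E) :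
    IsDispersal G fun v => D v ∪ E v := fun v e he =>
  (mem_union.1 he).elim (hD v e) (hE v e)

theorem isDispersal_biUnion {ι : Type*} {K : Finset ι} {g : ι → V → Finset (Sym2 V)}
    (hg : ∀ i ∈ K, IsDispersal G (g i)) : IsDispersal G fun v => K.biUnion fun i => g i v :=
  fun v e he => by
    obtain ⟨i, hi, he⟩ := mem_biUnion.1 he
    exact hg i hi v e he

variable [Fintype V]

theorem cost_piecewise (s : Finset V) (D : V → Finset (Sym2 V)) :
    cost (s.piecewise D fun _ => ∅) = ∑ v ∈ s, (D v).card := by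
  simp only [cost, piecewise, apply_ite card, card_empty, sum_ite_mem, univ_inter]

theorem cost_union_le : cost (fun v => D v ∪ E v) ≤ cost D + cost E := by
  simp only [cost, ← sum_add_distrib]
  exact sum_le_sum fun v _ => card_union_le _ _

theorem cost_biUnion_le {ι : Type*} (K : Finset ι) (g : ι → V → Finset (Sym2 V)) :
    cost (fun v => K.biUnion fun i => g i v) ≤ ∑ i ∈ K, cost (g i) := by
  simp only [cost]
  rw [sum_comm]
  exact sum_le_sum fun v _ => card_biUnion_le

/-- The dispersals over which `Cfun` minimises, for `Q = ERsub HR R r u`. -/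
def IsAnchoredDispersal (G : SimpleGraph V) (Q : Set (Sym2 V)) (u α : V)
    (D : V → Finset (Sym2 V)) : Prop :=
  IsDispersal G D ∧ Satisfies G D Q ∧ ReachableWithin G (D u) u α

theorem isDispersal_edgeFinset : IsDispersal G fun _ => G.edgeFinset :=
  fun _ _ he => mem_edgeFinset.1 he

theorem SimpleGraph.Connected.satisfies_edgeFinset (hG : G.Connected) (Q : Set (Sym2 V)) :
    Satisfies G (fun _ => G.edgeFinset) Q :=
  satisfies_iff.2 fun x y _ => (hG.reachableWithin_edgeFinset x y).mono subset_union_left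

theorem cmin_le (hD : IsDispersal G D) (hQ : Satisfies G D Q) : cmin G Q ≤ cost D :=
  Nat.sInf_le ⟨D, hD, hQ, rfl⟩

theorem exists_cost_eq_cmin (hG : G.Connected) (Q : Set (Sym2 V)) :
    ∃ D, IsDispersal G D ∧ Satisfies G D Q ∧ cost D = cmin G Q :=
  Nat.sInf_mem (s := {c | ∃ D, IsDispersal G D ∧ Satisfies G D Q ∧ cost D = c})
    ⟨_, _, isDispersal_edgeFinset, hG.satisfies_edgeFinset Q, rfl⟩

theorem cfun_le {HR : SimpleGraph V} {R : Finset (Sym2 V)} {r : V}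
    (hD : IsAnchoredDispersal G (ERsub HR R r u) u α D) : Cfun G HR R r u α ≤ cost D :=
  Nat.sInf_le ⟨D, hD.1, hD.2.1, hD.2.2, rfl⟩

theorem exists_cost_eq_cfun (hG : G.Connected) (HR : SimpleGraph V) (R : Finset (Sym2 V))
    (r u α : V) :
    ∃ D, IsAnchoredDispersal G (ERsub HR R r u) u α D ∧ cost D = Cfun G HR R r u α := by
  obtain ⟨D, hD, hQ, hu, hc⟩ := Nat.sInf_mem (s := {c | ∃ D, IsDispersal G D ∧
      Satisfies G D (ERsub HR R r u) ∧ ReachableWithin G (D u) u α ∧ cost D = c})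
    ⟨_, _, isDispersal_edgeFinset, hG.satisfies_edgeFinset _,
      hG.reachableWithin_edgeFinset u α, rfl⟩
  exact ⟨D, ⟨hD, hQ, hu⟩, hc⟩

end Dispersal

section Exchange

open scoped Classical

variable {V : Type*} {G : SimpleGraph V} {S : Finset (Sym2 V)} {D : V → Finset (Sym2 V)}
  {Q : Set (Sym2 V)} {a b x : V} {h : Sym2 V}

noncomputable def detachedEdges (G : SimpleGraph V) (S : Finset (Sym2 V)) (b : V) :
    Finset (Sym2 V) :=
  S.filter fun h => ∀ x ∈ h, ¬ ReachableWithin G S b x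

theorem card_detachedEdges_erase_add_one (hh : ∀ x ∈ h, ¬ ReachableWithin G S b x)
    (hS : h ∈ S) : (detachedEdges G (S.erase h) b).card + 1 = (detachedEdges G S b).card := by
  have : detachedEdges G (S.erase h) b = (detachedEdges G S b).erase h := by
    simp only [detachedEdges, filter_erase, ReachableWithin.erase_iff hh]
  have hmem : h ∈ detachedEdges G S b := mem_filter.2 ⟨hS, hh⟩
  rw [this, card_erase_add_one hmem]

theorem card_detachedEdges_insert_le (hx : x ∈ h) (hax : ReachableWithin G S a x) :
    (detachedEdges G (insert h S) a).card ≤ (detachedEdges G S a).card := by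
  refine card_le_card fun e he => ?_
  obtain ⟨heS, hdet⟩ := mem_filter.1 he
  refine mem_filter.2 ⟨(mem_insert.1 heS).resolve_left ?_, fun y hy hay => ?_⟩
  · rintro rfl
    exact hdet x hx (hax.mono (subset_insert e S))
  · exact hdet y hy (hay.mono (subset_insert h S))

noncomputable def moveEdge (D : V → Finset (Sym2 V)) (a b : V) (h : Sym2 V) :
    V → Finset (Sym2 V) :=
  Function.update (Function.update D b ((D b).erase h)) a (insert h (D a))

@[simp] theorem moveEdge_left : moveEdge D a b h a = insert h (D a) := by
  simp [moveEdge]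

theorem moveEdge_right (hab : a ≠ b) : moveEdge D a b h b = (D b).erase h := by
  simp [moveEdge, hab.symm]

theorem moveEdge_of_ne {v : V} (hva : v ≠ a) (hvb : v ≠ b) : moveEdge D a b h v = D v := by
  simp [moveEdge, hva, hvb]

theorem subset_moveEdge {v : V} (hvb : v ≠ b) : D v ⊆ moveEdge D a b h v := by
  by_cases hva : v = a
  · subst hva
    simp
  · rw [moveEdge_of_ne hva hvb]

theorem union_subset_moveEdge (hab : a ≠ b) :
    D a ∪ D b ⊆ moveEdge D a b h a ∪ moveEdge D a b h b := by
  intro e he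
  rw [mem_union] at he
  rw [moveEdge_left, moveEdge_right hab, mem_union, mem_insert, mem_erase]
  by_cases e = h <;> tauto

theorem isDispersal_moveEdge (hD : IsDispersal G D) (hh : h ∈ D b) :
    IsDispersal G (moveEdge D a b h) := by
  intro v e he
  by_cases hva : v = a
  · subst hva
    rw [moveEdge_left] at he
    rcases mem_insert.1 he with rfl | he
    exacts [hD b e hh, hD v e he]
  by_cases hvb : v = b
  · subst hvb
    rw [moveEdge_right (Ne.symm hva)] at he
    exact hD v e (mem_of_mem_erase he)
  · rw [moveEdge_of_ne hva hvb] at he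
    exact hD v e he

/-- Only requests `{b, z}` with `z ≠ a` lose edges; for them the parts of `D b` and `D z`
reachable from `b` and `z` meet, and the former avoids `h`. -/
theorem satisfies_moveEdge (hsat : Satisfies G D Q) (hab : a ≠ b)
    (hdet : ∀ x ∈ h, ¬ ReachableWithin G (D b) b x)
    (hQ : ∀ z, s(b, z) ∈ Q → z ≠ a → z ≠ b → ∀ h', ¬ IsTransferable G D b z h') :
    Satisfies G (moveEdge D a b h) Q := by
  rw [satisfies_iff] at hsat ⊢
  have hb : ∀ z, s(b, z) ∈ Q →
      ReachableWithin G (moveEdge D a b h b ∪ moveEdge D a b h z) b z := by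
    intro z hz
    by_cases hzb : z = b
    · rw [hzb]
      exact .refl b
    by_cases hza : z = a
    · rw [hza] at hz ⊢
      rw [union_comm]
      exact (hsat b a hz).mono (union_comm (D a) (D b) ▸ union_subset_moveEdge hab)
    rcases (hsat b z hz).meet_or_isTransferable with ⟨ζ, hbζ, hzζ⟩ | ⟨h', hh'⟩
    · rw [moveEdge_right hab, moveEdge_of_ne hza hzb]
      exact ((ReachableWithin.erase_iff hdet).2 hbζ).mono subset_union_left |>.trans
        (hzζ.symm.mono subset_union_right)
    · exact absurd hh' (hQ z hz hza hzb h')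
  intro x y hxy
  by_cases hx : x = b
  · exact hx ▸ hb y (hx ▸ hxy)
  by_cases hy : y = b
  · subst hy
    exact (hb x (Sym2.eq_swap ▸ hxy)).of_sym2_eq Sym2.eq_swap
  exact (hsat x y hxy).mono (union_subset_union (subset_moveEdge hx) (subset_moveEdge hy))

variable [Fintype V]

theorem sum_moveEdge (F : V → Finset (Sym2 V) → ℕ) (hab : a ≠ b) :
    ∑ v, F v (moveEdge D a b h v) + (F a (D a) + F b (D b)) =
      ∑ v, F v (D v) + (F a (insert h (D a)) + F b ((D b).erase h)) := by
  have split (φ : V → ℕ) :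
      ∑ v, φ v = φ a + φ b + ∑ v ∈ (univ.erase a).erase b, φ v := by
    rw [← add_sum_erase _ _ (mem_univ a),
      ← add_sum_erase _ _ (mem_erase.2 ⟨hab.symm, mem_univ b⟩), add_assoc]
  rw [split, split fun v => F v (D v), moveEdge_left, moveEdge_right hab,
    sum_congr rfl fun v hv => by
      rw [moveEdge_of_ne (ne_of_mem_erase (mem_of_mem_erase hv)) (ne_of_mem_erase hv)]]
  ring

theorem cost_moveEdge (hab : a ≠ b) (hhb : h ∈ D b) (hha : h ∉ D a) :
    cost (moveEdge D a b h) = cost D := by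
  have := sum_moveEdge (fun _ S => S.card) hab (D := D) (h := h)
  have := card_erase_add_one hhb
  rw [card_insert_of_notMem hha] at *
  simp only [cost]
  omega

noncomputable def numDetached (G : SimpleGraph V) (D : V → Finset (Sym2 V)) : ℕ :=
  ∑ v, (detachedEdges G (D v) v).card

theorem numDetached_moveEdge_lt (hab : a ≠ b) (hh : IsTransferable G D a b h) :
    numDetached G (moveEdge D a b h) < numDetached G D := by
  obtain ⟨hhb, -, hdet, x, hx, hax⟩ := hh
  have := sum_moveEdge (fun v S => (detachedEdges G S v).card) hab (D := D) (h := h)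
  have := card_detachedEdges_insert_le hx hax
  have := card_detachedEdges_erase_add_one hdet hhb
  simp only [numDetached]
  omega

def MinimizesDetached (G : SimpleGraph V) (P : (V → Finset (Sym2 V)) → Prop)
    (D : V → Finset (Sym2 V)) : Prop :=
  P D ∧ ∀ D', P D' → cost D' = cost D → numDetached G D ≤ numDetached G D'

theorem exists_minimizesDetached {P : (V → Finset (Sym2 V)) → Prop} (hD : P D) :
    ∃ D', MinimizesDetached G P D' ∧ cost D' = cost D := by
  obtain ⟨D', ⟨hP, hc⟩, hmin⟩ :=
    (measure (numDetached G)).wf.has_min {D' | P D' ∧ cost D' = cost D} ⟨D, hD, rfl⟩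
  exact ⟨D', ⟨hP, fun D'' hP' hc' => not_lt.1 (hmin D'' ⟨hP', hc'.trans hc⟩)⟩, hc⟩

end Exchange

section RootedTree

variable {V : Type*} {HR : SimpleGraph V} {R : Finset (Sym2 V)} {r u w x y z : V}

@[simp] theorem inSubtree_self (r u : V) : InSubtree HR r u u := by
  simp [InSubtree]

theorem InSubtree.trans (hru : HR.Reachable r u) (huw : HR.Reachable u w)
    (hw : InSubtree HR r u w) (hx : InSubtree HR r w x) : InSubtree HR r u x := by
  have := hru.dist_triangle_left x
  have := huw.dist_triangle_left x
  have := hru.dist_triangle_left w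
  unfold InSubtree at *
  omega

/-- Both vertices lie on the unique shortest path from `r` to `z`. -/
theorem SimpleGraph.IsAcyclic.eq_of_inSubtree_of_dist_eq (hacyc : HR.IsAcyclic) {m₁ m₂ : V}
    (h₁ : HR.Reachable r m₁) (h₂ : HR.Reachable r m₂) (hz : HR.Reachable r z)
    (hm₁ : InSubtree HR r m₁ z) (hm₂ : InSubtree HR r m₂ z)
    (hd : HR.dist r m₁ = HR.dist r m₂) : m₁ = m₂ := by
  have onPath (m : V) (hm : HR.Reachable r m) (hmz : InSubtree HR r m z) :
      ∃ P : HR.Path r z, P.1.getVert (HR.dist r m) = m := by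
    obtain ⟨p, hp⟩ := hm.exists_walk_length_eq_dist
    obtain ⟨q, hq⟩ := (hm.symm.trans hz).exists_walk_length_eq_dist
    refine ⟨⟨p.append q, (p.append q).isPath_of_length_eq_dist ?_⟩, ?_⟩
    · rw [Walk.length_append, hp, hq, hmz]
    · simp [Walk.getVert_append, hp]
  obtain ⟨P₁, hP₁⟩ := onPath m₁ h₁ hm₁
  obtain ⟨P₂, hP₂⟩ := onPath m₂ h₂ hm₂
  rw [← hP₁, ← hP₂, hd, (hacyc.subsingleton_path r z).elim P₁ P₂]

@[simp] theorem mk_mem_ERsub :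
    s(x, y) ∈ ERsub HR R r u ↔ s(x, y) ∈ R ∧ InSubtree HR r u x ∧ InSubtree HR r u y := by
  simp [ERsub, or_imp, forall_and]

variable [Fintype V]

theorem mem_childrenOf :
    w ∈ childrenOf HR r u ↔ HR.Adj u w ∧ HR.dist r w = HR.dist r u + 1 := by
  simp [childrenOf]

theorem inSubtree_of_mem_childrenOf (hw : w ∈ childrenOf HR r u) : InSubtree HR r u w := by
  obtain ⟨hadj, hd⟩ := mem_childrenOf.1 hw
  rw [InSubtree, hd, dist_eq_one_iff_adj.2 hadj]

theorem not_inSubtree_of_mem_childrenOf (hw : w ∈ childrenOf HR r u) :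
    ¬ InSubtree HR r w u := by
  have := (mem_childrenOf.1 hw).2
  unfold InSubtree
  omega

theorem exists_mem_childrenOf_inSubtree (hru : HR.Reachable r u) (hux : HR.Reachable u x)
    (hx : InSubtree HR r u x) (hxu : x ≠ u) :
    ∃ w ∈ childrenOf HR r u, InSubtree HR r w x := by
  obtain ⟨p, hp⟩ := hux.exists_walk_length_eq_dist
  cases p with
  | nil => exact absurd rfl hxu
  | @cons _ w _ hadj q =>
    -- `w`, the second vertex of a shortest path from `u` to `x`, is the child we want
    have := dist_le q
    have := hadj.reachable.dist_triangle_left x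
    have := hru.dist_triangle_left w
    have := (hru.trans hadj.reachable).dist_triangle_left x
    rw [dist_eq_one_iff_adj.2 hadj] at *
    rw [Walk.length_cons] at hp
    refine ⟨w, mem_childrenOf.2 ⟨hadj, ?_⟩, ?_⟩ <;> unfold InSubtree at * <;> omega

theorem SimpleGraph.IsAcyclic.eq_of_mem_childrenOf_of_inSubtree (hacyc : HR.IsAcyclic)
    (hru : HR.Reachable r u) {w' : V} (hw : w ∈ childrenOf HR r u)
    (hw' : w' ∈ childrenOf HR r u) (hx : InSubtree HR r w x) (hx' : InSubtree HR r w' x) :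
    w = w' := by
  obtain ⟨hadj, hd⟩ := mem_childrenOf.1 hw
  obtain ⟨hadj', hd'⟩ := mem_childrenOf.1 hw'
  have hrx : HR.Reachable r x := Reachable.of_dist_ne_zero (by unfold InSubtree at hx; omega)
  exact hacyc.eq_of_inSubtree_of_dist_eq (hru.trans hadj.reachable) (hru.trans hadj'.reachable)
    hrx hx hx' (hd.trans hd'.symm)

theorem SimpleGraph.IsAcyclic.mem_childrenOf_of_adj (hacyc : HR.IsAcyclic) {a b : V}
    (hra : HR.Reachable r a) (hb : b ∈ childrenOf HR r a) (hbz : HR.Adj b z) (hza : z ≠ a) :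
    z ∈ childrenOf HR r b := by
  obtain ⟨hadj, hd⟩ := mem_childrenOf.1 hb
  have hrb := hra.trans hadj.reachable
  rcases hacyc.dist_eq_dist_add_one_of_adj_of_reachable r hbz hrb with h | h
  · refine absurd (hacyc.eq_of_inSubtree_of_dist_eq (hrb.trans hbz.reachable) hra hrb ?_
      (inSubtree_of_mem_childrenOf hb) (by omega)) hza
    rw [InSubtree, dist_eq_one_iff_adj.2 hbz.symm, h]
  · exact mem_childrenOf.2 ⟨hbz, h⟩

theorem eq_or_exists_mem_childrenOf (hru : HR.Reachable r u) (hrx : HR.Reachable r x)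
    (hy : y ∈ childrenOf HR r x) (hx : InSubtree HR r u x) :
    x = u ∨ ∃ w ∈ childrenOf HR r u, InSubtree HR r w x ∧ InSubtree HR r w y := by
  refine or_iff_not_imp_left.2 fun hxu => ?_
  obtain ⟨w, hw, hwx⟩ := exists_mem_childrenOf_inSubtree hru (hru.symm.trans hrx) hx hxu
  have hrw := hru.trans (mem_childrenOf.1 hw).1.reachable
  exact ⟨w, hw, hwx, hwx.trans hrw (hrw.symm.trans hrx) (inSubtree_of_mem_childrenOf hy)⟩

theorem mk_mem_ERsub_of_mem_childrenOf (hHR : HR = fromEdgeSet ↑R)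
    (hw : w ∈ childrenOf HR r u) : s(u, w) ∈ ERsub HR R r u := by
  have hadj := (mem_childrenOf.1 hw).1
  rw [hHR, fromEdgeSet_adj] at hadj
  exact mk_mem_ERsub.2 ⟨hadj.1, inSubtree_self r u, inSubtree_of_mem_childrenOf hw⟩

theorem ERsub_subset_of_mem_childrenOf (hru : HR.Reachable r u) (hw : w ∈ childrenOf HR r u) :
    ERsub HR R r w ⊆ ERsub HR R r u := fun _ ⟨he, hsub⟩ =>
  ⟨he, fun x hx => (inSubtree_of_mem_childrenOf hw).trans hru (mem_childrenOf.1 hw).1.reachable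
    (hsub x hx)⟩

theorem mem_ERsub_cases (hHR : HR = fromEdgeSet ↑R) (hacyc : HR.IsAcyclic)
    (hreach : ∀ x ∈ HR.support, HR.Reachable r x) (hu : u ∈ HR.support)
    (he : s(x, y) ∈ ERsub HR R r u) (hxy : x ≠ y) :
    (∃ w ∈ childrenOf HR r u, s(x, y) = s(u, w)) ∨
      ∃ w ∈ childrenOf HR r u, s(x, y) ∈ ERsub HR R r w := by
  have hadj : HR.Adj x y := hHR ▸ (fromEdgeSet_adj _).2 ⟨(mk_mem_ERsub.1 he).1, hxy⟩
  have oriented {x y : V} (hy : y ∈ childrenOf HR r x) (he : s(x, y) ∈ ERsub HR R r u) :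
      (∃ w ∈ childrenOf HR r u, s(x, y) = s(u, w)) ∨
        ∃ w ∈ childrenOf HR r u, s(x, y) ∈ ERsub HR R r w := by
    obtain ⟨heR, hx, -⟩ := mk_mem_ERsub.1 he
    rcases eq_or_exists_mem_childrenOf (hreach u hu)
      (hreach x (mem_childrenOf.1 hy).1.mem_support_left) hy hx with rfl | ⟨w, hw, hwx, hwy⟩
    · exact .inl ⟨y, hy, rfl⟩
    · exact .inr ⟨w, hw, mk_mem_ERsub.2 ⟨heR, hwx, hwy⟩⟩
  rcases hacyc.dist_eq_dist_add_one_of_adj_of_reachable r hadj (hreach x hadj.mem_support_left)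
    with h | h
  · rw [Sym2.eq_swap] at he ⊢
    exact oriented (mem_childrenOf.2 ⟨hadj.symm, h⟩) he
  · exact oriented (mem_childrenOf.2 ⟨hadj, h⟩) he

end RootedTree

section Recurrence

open scoped Classical

variable {V : Type*} [Fintype V] {G HR : SimpleGraph V} {R : Finset (Sym2 V)} {r u α : V}
  {D : V → Finset (Sym2 V)}

/-- Moving `h` from `b` to `a` would lower `numDetached` at equal cost, so it must break a
request `{b, c}` to a child `c`, and the walk serving that request yields the new edge. -/
theorem MinimizesDetached.exists_isTransferable_child (hHR : HR = fromEdgeSet ↑R)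
    (hacyc : HR.IsAcyclic) (hreach : ∀ x ∈ HR.support, HR.Reachable r x)
    (hD : MinimizesDetached G (IsAnchoredDispersal G (ERsub HR R r u) u α) D) {a b : V}
    {h : Sym2 V} (hb : b ∈ childrenOf HR r a) (ha : InSubtree HR r u a)
    (hh : IsTransferable G D a b h) :
    ∃ c ∈ childrenOf HR r b, ∃ h', IsTransferable G D b c h' := by
  obtain ⟨⟨hdisp, hsat, hanchor⟩, hmin⟩ := hD
  obtain ⟨hadj, hd⟩ := mem_childrenOf.1 hb
  have hab : a ≠ b := by rintro rfl; omega
  have hbu : u ≠ b := by rintro rfl; unfold InSubtree at ha; omega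
  by_contra! hno
  have hsat' : Satisfies G (moveEdge D a b h) (ERsub HR R r u) :=
    satisfies_moveEdge hsat hab hh.2.2.1 fun z hz hza hzb => hno z <|
      hacyc.mem_childrenOf_of_adj (hreach a hadj.mem_support_left) hb
        (hHR ▸ (fromEdgeSet_adj _).2 ⟨(mk_mem_ERsub.1 hz).1, Ne.symm hzb⟩) hza
  exact (numDetached_moveEdge_lt hab hh).not_ge <| hmin _
    ⟨isDispersal_moveEdge hdisp hh.1, hsat', hanchor.mono (subset_moveEdge hbu)⟩
    (cost_moveEdge hab hh.1 hh.2.1)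

theorem satisfies_ERsub_of_forall_mem_childrenOf (hHR : HR = fromEdgeSet ↑R)
    (hacyc : HR.IsAcyclic) (hreach : ∀ x ∈ HR.support, HR.Reachable r x) (hu : u ∈ HR.support)
    (hchild : ∀ w ∈ childrenOf HR r u, Satisfies G D (ERsub HR R r w) ∧
      ∃ z, ReachableWithin G (D u) u z ∧ ReachableWithin G (D w) w z) :
    Satisfies G D (ERsub HR R r u) := by
  refine satisfies_iff.2 fun x y hxy => ?_
  by_cases hxy' : x = y
  · exact hxy' ▸ .refl x
  rcases mem_ERsub_cases hHR hacyc hreach hu hxy hxy' with ⟨w, hw, he⟩ | ⟨w, hw, hxy⟩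
  · obtain ⟨z, huz, hwz⟩ := (hchild w hw).2
    exact .of_sym2_eq he ((huz.mono subset_union_left).trans (hwz.symm.mono subset_union_right))
  · exact satisfies_iff.1 (hchild w hw).1 x y hxy

theorem MinimizesDetached.not_isTransferable (hHR : HR = fromEdgeSet ↑R) (hacyc : HR.IsAcyclic)
    (hreach : ∀ x ∈ HR.support, HR.Reachable r x) (hu : u ∈ HR.support)
    (hD : MinimizesDetached G (IsAnchoredDispersal G (ERsub HR R r u) u α) D) {a b : V}
    {h : Sym2 V} (hb : b ∈ childrenOf HR r a) (ha : InSubtree HR r u a) :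
    ¬ IsTransferable G D a b h := by
  intro hh
  -- the exchange step turns a transferable pair with deepest lower vertex into a deeper one
  set bad := univ.filter fun p : V × V =>
    p.2 ∈ childrenOf HR r p.1 ∧ InSubtree HR r u p.1 ∧ ∃ h, IsTransferable G D p.1 p.2 h
  obtain ⟨⟨a', b'⟩, hmem, hmax⟩ := bad.exists_max_image (fun p => HR.dist r p.2)
    ⟨(a, b), mem_filter.2 ⟨mem_univ _, hb, ha, h, hh⟩⟩
  obtain ⟨hb', ha', _, hh'⟩ : b' ∈ childrenOf HR r a' ∧ InSubtree HR r u a' ∧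
    ∃ h, IsTransferable G D a' b' h := (mem_filter.1 hmem).2
  obtain ⟨c, hc, h'', hh''⟩ := hD.exists_isTransferable_child hHR hacyc hreach hb' ha' hh'
  have hub' : InSubtree HR r u b' := ha'.trans (hreach u hu)
    ((hreach u hu).symm.trans (hreach a' (mem_childrenOf.1 hb').1.mem_support_left))
    (inSubtree_of_mem_childrenOf hb')
  have hc_le : HR.dist r c ≤ HR.dist r b' :=
    hmax (b', c) (mem_filter.2 ⟨mem_univ _, hc, hub', h'', hh''⟩)
  have := (mem_childrenOf.1 hc).2
  omega

theorem MinimizesDetached.exists_meet (hHR : HR = fromEdgeSet ↑R) (hacyc : HR.IsAcyclic)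
    (hreach : ∀ x ∈ HR.support, HR.Reachable r x) (hu : u ∈ HR.support)
    (hD : MinimizesDetached G (IsAnchoredDispersal G (ERsub HR R r u) u α) D) {w : V}
    (hw : w ∈ childrenOf HR r u) :
    ∃ z, ReachableWithin G (D u) u z ∧ ReachableWithin G (D w) w z :=
  (satisfies_iff.1 hD.1.2.1 u w (mk_mem_ERsub_of_mem_childrenOf hHR hw)).meet_or_isTransferable
    |>.resolve_right fun ⟨_, hh⟩ =>
      hD.not_isTransferable hHR hacyc hreach hu hw (inSubtree_self r u) hh

theorem card_add_sum_subtree_le_cost (hacyc : HR.IsAcyclic) (hru : HR.Reachable r u)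
    (D : V → Finset (Sym2 V)) :
    (D u).card + ∑ w ∈ childrenOf HR r u, ∑ v ∈ univ.filter (InSubtree HR r w), (D v).card
      ≤ cost D := by
  have hdisj : (childrenOf HR r u : Set V).PairwiseDisjoint
      fun w => univ.filter (InSubtree HR r w) := fun w hw w' hw' hne =>
    disjoint_left.2 fun x hx hx' => hne <|
      hacyc.eq_of_mem_childrenOf_of_inSubtree hru hw hw' (mem_filter.1 hx).2 (mem_filter.1 hx').2
  have hu : u ∉ (childrenOf HR r u).biUnion fun w => univ.filter (InSubtree HR r w) := by
    simp only [mem_biUnion, mem_filter, not_exists, not_and]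
    exact fun w hw _ => not_inSubtree_of_mem_childrenOf hw
  rw [← sum_biUnion hdisj, ← sum_insert (f := fun v => (D v).card) hu]
  exact sum_le_sum_of_subset (subset_univ _)

def starRequests (u α : V) (K : Finset V) (f : V → V) : Set (Sym2 V) :=
  {e | e = s(u, α) ∨ ∃ w ∈ K, e = s(u, f w)}

theorem cfun_le_cmin_add_sum (hG : G.Connected) (hHR : HR = fromEdgeSet ↑R)
    (hacyc : HR.IsAcyclic) (hreach : ∀ x ∈ HR.support, HR.Reachable r x) (hu : u ∈ HR.support)
    (f : V → V) :
    Cfun G HR R r u α ≤ cmin G (starRequests u α (childrenOf HR r u) f) +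
      ∑ w ∈ childrenOf HR r u, Cfun G HR R r w (f w) := by
  set K := childrenOf HR r u
  obtain ⟨D₀, hD₀, hsat₀, hcost₀⟩ := exists_cost_eq_cmin hG (starRequests u α K f)
  choose g hg hgcost using fun w => exists_cost_eq_cfun hG HR R r w (f w)
  -- all edges of the star dispersal are handed to `u`, the rest comes from the children
  set S₀ := univ.biUnion D₀
  set D : V → Finset (Sym2 V) := fun v =>
    ({u} : Finset V).piecewise (fun _ => S₀) (fun _ => ∅) v ∪ K.biUnion fun w => g w v
  have hS₀ : S₀ ⊆ D u := by simp [D]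
  have hgD (w : V) (hw : w ∈ K) (v : V) : g w v ⊆ D v :=
    (subset_biUnion_of_mem (fun w => g w v) hw).trans subset_union_right
  have hstar (t : V) (ht : s(u, t) ∈ starRequests u α K f) : ReachableWithin G (D u) u t :=
    (satisfies_iff.1 hsat₀ u t ht).mono <| (union_subset (subset_biUnion_of_mem D₀ (mem_univ u))
      (subset_biUnion_of_mem D₀ (mem_univ t))).trans hS₀
  have hdisp : IsDispersal G D := by
    refine IsDispersal.union (IsDispersal.piecewise (fun _ e he => ?_) _)
      (isDispersal_biUnion fun w _ => (hg w).1)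
    obtain ⟨v, -, he⟩ := mem_biUnion.1 he
    exact hD₀ v e he
  have hD : IsAnchoredDispersal G (ERsub HR R r u) u α D :=
    ⟨hdisp, satisfies_ERsub_of_forall_mem_childrenOf hHR hacyc hreach hu fun w hw =>
      ⟨(hg w).2.1.mono (hgD w hw), f w, hstar (f w) (.inr ⟨w, hw, rfl⟩),
        (hg w).2.2.mono (hgD w hw w)⟩, hstar α (.inl rfl)⟩
  calc Cfun G HR R r u α ≤ cost D := cfun_le hD
    _ ≤ S₀.card + ∑ w ∈ K, cost (g w) := by
      refine cost_union_le.trans (add_le_add ?_ (cost_biUnion_le K g))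
      rw [cost_piecewise, sum_singleton]
    _ ≤ cost D₀ + ∑ w ∈ K, Cfun G HR R r w (f w) := by
      gcongr with w
      · exact card_biUnion_le
      · exact (hgcost w).le
    _ = _ := by rw [hcost₀]

theorem exists_cmin_add_sum_le_cfun (hG : G.Connected) (hHR : HR = fromEdgeSet ↑R)
    (hacyc : HR.IsAcyclic) (hreach : ∀ x ∈ HR.support, HR.Reachable r x)
    (hu : u ∈ HR.support) :
    ∃ f : V → V, cmin G (starRequests u α (childrenOf HR r u) f) +
      ∑ w ∈ childrenOf HR r u, Cfun G HR R r w (f w) ≤ Cfun G HR R r u α := by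
  set K := childrenOf HR r u
  obtain ⟨D₀, hD₀, hcost₀⟩ := exists_cost_eq_cfun hG HR R r u α
  obtain ⟨D, hD, hcost⟩ := exists_minimizesDetached (G := G) hD₀
  choose! f hfu hfw using fun w (hw : w ∈ K) => hD.exists_meet hHR hacyc hreach hu hw
  obtain ⟨⟨hdisp, hsat, hanchor⟩, -⟩ := hD
  have hstar : cmin G (starRequests u α K f) ≤ (D u).card := by
    rw [← sum_singleton (fun v => (D v).card) u, ← cost_piecewise]
    refine cmin_le (hdisp.piecewise _) (satisfies_iff.2 ?_)
    have hDu (t : V) : D u ⊆ ({u} : Finset V).piecewise D (fun _ => ∅) u ∪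
        ({u} : Finset V).piecewise D (fun _ => ∅) t := by
      simp
    rintro x y (he | ⟨w, hw, he⟩)
    · exact .of_sym2_eq he (hanchor.mono (hDu α))
    · exact .of_sym2_eq he ((hfu w hw).mono (hDu (f w)))
  have hchild (w : V) (hw : w ∈ K) :
      Cfun G HR R r w (f w) ≤ ∑ v ∈ univ.filter (InSubtree HR r w), (D v).card := by
    rw [← cost_piecewise]
    refine cfun_le ⟨hdisp.piecewise _, satisfies_iff.2 fun x y hxy => ?_, ?_⟩
    · obtain ⟨-, hx, hy⟩ := mk_mem_ERsub.1 hxy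
      rw [piecewise_eq_of_mem _ _ _ (mem_filter.2 ⟨mem_univ x, hx⟩),
        piecewise_eq_of_mem _ _ _ (mem_filter.2 ⟨mem_univ y, hy⟩)]
      exact satisfies_iff.1 hsat x y (ERsub_subset_of_mem_childrenOf (hreach u hu) hw hxy)
    · rw [piecewise_eq_of_mem _ _ _ (mem_filter.2 ⟨mem_univ w, inSubtree_self r w⟩)]
      exact hfw w hw
  refine ⟨f, ?_⟩
  calc _ ≤ (D u).card + ∑ w ∈ K, ∑ v ∈ univ.filter (InSubtree HR r w), (D v).card :=
        add_le_add hstar (sum_le_sum hchild)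
    _ ≤ cost D := card_add_sum_subtree_le_cost hacyc (hreach u hu) D
    _ = Cfun G HR R r u α := hcost.trans hcost₀

end Recurrence

theorem stmt10_general {V : Type*} [Fintype V] (G : SimpleGraph V) (hG : G.Connected)
    (R : Finset (Sym2 V))
    (HR : SimpleGraph V) (hHR : HR = SimpleGraph.fromEdgeSet ↑R)
    (hacyc : HR.IsAcyclic)
    (htree : ∀ a ∈ HR.support, ∀ b ∈ HR.support, HR.Reachable a b)
    (r : V) (hr : r ∈ HR.support)
    (u : V) (hu : u ∈ HR.support) (α : V) :
    Cfun G HR R r u α =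
      sInf {c | ∃ f : V → V,
        c = cmin G {e | e = s(u, α) ∨ ∃ w ∈ childrenOf HR r u, e = s(u, f w)}
          + ∑ w ∈ childrenOf HR r u, Cfun G HR R r w (f w)} := by
  have hreach : ∀ x ∈ HR.support, HR.Reachable r x := htree r hr
  refine le_antisymm (le_csInf ⟨_, fun _ => u, rfl⟩ ?_) ?_
  · rintro _ ⟨f, rfl⟩
    exact cfun_le_cmin_add_sum hG hHR hacyc hreach hu f
  · obtain ⟨f, hf⟩ := exists_cmin_add_sum_le_cfun (α := α) hG hHR hacyc hreach hu
    exact hf.trans' (Nat.sInf_le ⟨f, rfl⟩)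

theorem stmt10 {V : Type*} [Fintype V] (G : SimpleGraph V) (hG : G.Connected)
    (R : Finset (Sym2 V)) (hdiag : ∀ e ∈ R, ¬ e.IsDiag)
    (HR : SimpleGraph V) (hHR : HR = SimpleGraph.fromEdgeSet ↑R)
    (hacyc : HR.IsAcyclic)
    (htree : ∀ a ∈ HR.support, ∀ b ∈ HR.support, HR.Reachable a b)
    (r : V) (hr : r ∈ HR.support)
    (u : V) (hu : u ∈ HR.support) (α : V) :
    Cfun G HR R r u α =
      sInf {c | ∃ f : V → V,
        c = cmin G {e | e = s(u, α) ∨ ∃ w ∈ childrenOf HR r u, e = s(u, f w)}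
          + ∑ w ∈ childrenOf HR r u, Cfun G HR R r w (f w)} :=
  stmt10_general G hG R HR hHR hacyc htree r hr u hu α
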